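/- Let X be a Banach space satisfying: every weakly null sequence of N-homogeneous polynomials (P_n) and every P_N-weakly convergent sequence x_n → x satisfy P_n(x_n) → 0. Then for any Banach space Y, any weakly compact set K ⊆ Y, and any P_N-weakly compact set J ⊆ X, the set {θ_N(j)⊗k : j ∈ J, k ∈ K} is relatively weakly compact in (⊗̂^N_s X)⊗̂Y. -/

import Mathlib

/-!
Fix `Φ` in the bidual of `L(^N X; Y*)`. Symmetrizing `v ↦ Φ (T ↦ T v y)` gives a symmetric
`N`-linear form `Q_y` on `X` whose diagonal is `Φ (θ_N(x) ⊗ y)`, and `y ↦ Q_y` is bounded linear.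
Along subsequences with `j_n → j₀` `P_N`-weakly and `k_n → k₀` weakly, `Q_{k_n} - Q_{k₀}` is
weakly null, so the hypothesis on `X` gives `(Q_{k_n} - Q_{k₀})(j_n, …, j_n) → 0`, while
`Q_{k₀}(j_n, …, j_n) → Q_{k₀}(j₀, …, j₀)` by `P_N`-weak convergence. Hence
`Φ (θ_N(j_n) ⊗ k_n) → Φ (θ_N(j₀) ⊗ k₀)`.
-/

open Filter Topology

/-- Port helper: the canonical `AddCommGroup` instance (found by `inferInstance`), stated
directly so that instance search no longer has to find it by nested unification. -/
noncomputable instance instAddCommGroupCMMDual (N : ℕ) (X Y : Type*) [NormedAddCommGroup X]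
    [NormedSpace ℂ X] [NormedAddCommGroup Y] [NormedSpace ℂ Y] :
    AddCommGroup (ContinuousMultilinearMap ℂ (fun _ : Fin N => X) (Y →L[ℂ] ℂ)) :=
  inferInstance

/-- The canonical image of the elementary tensor `θ_N(j) ⊗ k` of `(⊗̂^N_s X) ⊗̂ Y` in the
dual of `((⊗̂^N X) ⊗̂ Y)^*`, where the latter dual is realized as the space of bounded
`N`-linear maps from `X` into `Y^*`. -/
noncomputable def deltaTensor (N : ℕ) {X Y : Type*} [NormedAddCommGroup X] [NormedSpace ℂ X]
    [NormedAddCommGroup Y] [NormedSpace ℂ Y] (j : X) (k : Y) :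
    StrongDual ℂ (ContinuousMultilinearMap ℂ (fun _ : Fin N => X) (Y →L[ℂ] ℂ)) :=
  (ContinuousLinearMap.apply ℂ ℂ k).comp
    (ContinuousMultilinearMap.apply ℂ (fun _ : Fin N => X) (Y →L[ℂ] ℂ) (fun _ => j))

/-- The canonical copy of `(⊗̂^N_s X) ⊗̂ Y` inside the dual of `((⊗̂^N X) ⊗̂ Y)^*`:
the closed linear span of the elementary tensors `θ_N(j) ⊗ k` (by polarization, the
diagonal tensors `θ_N(j)` span a dense subspace of `⊗̂^N_s X`). -/
noncomputable def tensorSpan (N : ℕ) (X Y : Type*) [NormedAddCommGroup X] [NormedSpace ℂ X]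
    [NormedAddCommGroup Y] [NormedSpace ℂ Y] :
    Submodule ℂ
      (StrongDual ℂ (ContinuousMultilinearMap ℂ (fun _ : Fin N => X) (Y →L[ℂ] ℂ))) :=
  (Submodule.span ℂ (Set.range (fun p : X × Y => deltaTensor N p.1 p.2))).topologicalClosure

namespace ContinuousMultilinearMap

variable {𝕜 ι E F : Type*} [NontriviallyNormedField 𝕜] [Fintype ι] [DecidableEq ι]
  [NormedAddCommGroup E] [NormedSpace 𝕜 E] [NormedAddCommGroup F] [NormedSpace 𝕜 F]

variable (𝕜 ι E F) in
noncomputable def symmetrizeL :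
    ContinuousMultilinearMap 𝕜 (fun _ : ι => E) F →L[𝕜]
      ContinuousMultilinearMap 𝕜 (fun _ : ι => E) F :=
  (Fintype.card (Equiv.Perm ι) : 𝕜)⁻¹ •
    ∑ σ : Equiv.Perm ι, ((domDomCongrₗᵢ 𝕜 E F σ : _ ≃ₗᵢ[𝕜] _) : _ →L[𝕜] _)

lemma symmetrizeL_apply (f : ContinuousMultilinearMap 𝕜 (fun _ : ι => E) F) (v : ι → E) :
    symmetrizeL 𝕜 ι E F f v =
      (Fintype.card (Equiv.Perm ι) : 𝕜)⁻¹ • ∑ σ : Equiv.Perm ι, f (fun i => v (σ i)) := by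
  simp [symmetrizeL, domDomCongrₗᵢ]

lemma symmetrizeL_apply_comp_perm (f : ContinuousMultilinearMap 𝕜 (fun _ : ι => E) F)
    (v : ι → E) (τ : Equiv.Perm ι) :
    symmetrizeL 𝕜 ι E F f (v ∘ τ) = symmetrizeL 𝕜 ι E F f v := by
  simp only [symmetrizeL_apply]
  congr 1
  exact Fintype.sum_bijective (τ * ·) (Group.mulLeft_bijective τ) _ _ fun _ => rfl

lemma symmetrizeL_apply_const [CharZero 𝕜] (f : ContinuousMultilinearMap 𝕜 (fun _ : ι => E) F)
    (x : E) : symmetrizeL 𝕜 ι E F f (fun _ => x) = f (fun _ => x) := by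
  have hcard : (Fintype.card (Equiv.Perm ι) : 𝕜) ≠ 0 := Nat.cast_ne_zero.2 Fintype.card_ne_zero
  rw [symmetrizeL_apply, Finset.sum_const, Finset.card_univ, ← Nat.cast_smul_eq_nsmul 𝕜,
    smul_smul, inv_mul_cancel₀ hcard, one_smul]

end ContinuousMultilinearMap

section BidualForm

variable (N : ℕ) {X Y : Type*} [NormedAddCommGroup X] [NormedSpace ℂ X]
  [NormedAddCommGroup Y] [NormedSpace ℂ Y]

/-- The symmetrization of `v ↦ Φ (T ↦ T v y)`, assembled from bounded linear maps so that it is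
bounded linear in `y`. -/
noncomputable def symmetricFormOfBidual
    (Φ : StrongDual ℂ
      (StrongDual ℂ (ContinuousMultilinearMap ℂ (fun _ : Fin N => X) (Y →L[ℂ] ℂ)))) :
    Y →L[ℂ] ContinuousMultilinearMap ℂ (fun _ : Fin N => X) ℂ :=
  ContinuousMultilinearMap.symmetrizeL ℂ (Fin N) X ℂ ∘L
    ContinuousLinearMap.compContinuousMultilinearMapL ℂ (fun _ : Fin N => X) _ ℂ Φ ∘L
    (ContinuousLinearMap.flipMultilinearEquiv ℂ (fun _ : Fin N => X)
      (ContinuousMultilinearMap ℂ (fun _ : Fin N => X) (Y →L[ℂ] ℂ)) ℂ : _ →L[ℂ] _) ∘L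
    ContinuousLinearMap.compContinuousMultilinearMapL ℂ (fun _ : Fin N => X) (Y →L[ℂ] ℂ) ℂ ∘L
    ContinuousLinearMap.apply ℂ ℂ

variable {N}

lemma symmetricFormOfBidual_apply_comp_perm
    (Φ : StrongDual ℂ
      (StrongDual ℂ (ContinuousMultilinearMap ℂ (fun _ : Fin N => X) (Y →L[ℂ] ℂ))))
    (y : Y) (σ : Equiv.Perm (Fin N)) (v : Fin N → X) :
    symmetricFormOfBidual N Φ y (v ∘ σ) = symmetricFormOfBidual N Φ y v :=
  ContinuousMultilinearMap.symmetrizeL_apply_comp_perm _ v σ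

lemma symmetricFormOfBidual_apply_const
    (Φ : StrongDual ℂ
      (StrongDual ℂ (ContinuousMultilinearMap ℂ (fun _ : Fin N => X) (Y →L[ℂ] ℂ))))
    (x : X) (y : Y) :
    symmetricFormOfBidual N Φ y (fun _ => x) = Φ (deltaTensor N x y) :=
  ContinuousMultilinearMap.symmetrizeL_apply_const _ x

end BidualForm

section PNWeak

variable (𝕜 : Type*) [NontriviallyNormedField 𝕜] (N : ℕ) {X : Type*} [NormedAddCommGroup X]
  [NormedSpace 𝕜 X]

def PNWeaklyTendsto (x : ℕ → X) (x₀ : X) : Prop :=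
  ∀ M : ℕ, 1 ≤ M → M ≤ N → ∀ A : ContinuousMultilinearMap 𝕜 (fun _ : Fin M => X) 𝕜,
    Tendsto (fun n => A (fun _ => x n)) atTop (𝓝 (A (fun _ => x₀)))

variable (X) in
def HasPNDunfordPettis : Prop :=
  ∀ P : ℕ → ContinuousMultilinearMap 𝕜 (fun _ : Fin N => X) 𝕜,
    (∀ n (σ : Equiv.Perm (Fin N)) (v : Fin N → X), P n (v ∘ σ) = P n v) →
    (∀ Ψ : StrongDual 𝕜 (ContinuousMultilinearMap 𝕜 (fun _ : Fin N => X) 𝕜),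
      Tendsto (fun n => Ψ (P n)) atTop (𝓝 0)) →
    ∀ x x₀, PNWeaklyTendsto 𝕜 N x x₀ → Tendsto (fun n => P n (fun _ => x n)) atTop (𝓝 0)

variable {𝕜 N}

lemma PNWeaklyTendsto.comp {x : ℕ → X} {x₀ : X} (hx : PNWeaklyTendsto 𝕜 N x x₀) {ψ : ℕ → ℕ}
    (hψ : Tendsto ψ atTop atTop) : PNWeaklyTendsto 𝕜 N (x ∘ ψ) x₀ :=
  fun M hM hMN A => (hx M hM hMN A).comp hψ

theorem HasPNDunfordPettis.tendsto_apply_diag (hDP : HasPNDunfordPettis 𝕜 N X) (hN : 0 < N)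
    {Y : Type*} [NormedAddCommGroup Y] [NormedSpace 𝕜 Y]
    (L : Y →L[𝕜] ContinuousMultilinearMap 𝕜 (fun _ : Fin N => X) 𝕜)
    (hL : ∀ y (σ : Equiv.Perm (Fin N)) v, L y (v ∘ σ) = L y v) {k : ℕ → Y} {k₀ : Y}
    (hk : ∀ φ : StrongDual 𝕜 Y, Tendsto (fun n => φ (k n)) atTop (𝓝 (φ k₀)))
    {x : ℕ → X} {x₀ : X} (hx : PNWeaklyTendsto 𝕜 N x x₀) :
    Tendsto (fun n => L (k n) (fun _ => x n)) atTop (𝓝 (L k₀ (fun _ => x₀))) := by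
  have hweak (Ψ : StrongDual 𝕜 (ContinuousMultilinearMap 𝕜 (fun _ : Fin N => X) 𝕜)) :
      Tendsto (fun n => Ψ (L (k n - k₀))) atTop (𝓝 0) := by
    simpa only [ContinuousLinearMap.comp_apply, map_sub, sub_self] using
      (hk (Ψ ∘L L)).sub_const (Ψ (L k₀))
  have hnull := hDP (fun n => L (k n - k₀)) (fun n σ v => hL _ σ v) hweak x x₀ hx
  have hfixed := hx N hN le_rfl (L k₀)
  simpa only [map_sub, sub_apply, sub_add_cancel, zero_add] using hnull.add hfixed

end PNWeak

lemma deltaTensor_mem_tensorSpan (N : ℕ) {X Y : Type*} [NormedAddCommGroup X] [NormedSpace ℂ X]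
    [NormedAddCommGroup Y] [NormedSpace ℂ Y] (x : X) (y : Y) :
    deltaTensor N x y ∈ tensorSpan N X Y :=
  Submodule.le_topologicalClosure _ (Submodule.subset_span ⟨(x, y), rfl⟩)

theorem rel_weakly_compact_theta_tensor_general {X : Type*} [NormedAddCommGroup X]
    [NormedSpace ℂ X] (N : ℕ) (hN : 0 < N)
    (hDP : ∀ (P : ℕ → ContinuousMultilinearMap ℂ (fun _ : Fin N => X) ℂ),
      (∀ n (σ : Equiv.Perm (Fin N)) (v : Fin N → X), P n (v ∘ σ) = P n v) →
      (∀ Φ : StrongDual ℂ (ContinuousMultilinearMap ℂ (fun _ : Fin N => X) ℂ),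
        Tendsto (fun n => Φ (P n)) atTop (𝓝 0)) →
      ∀ (x : ℕ → X) (x₀ : X),
        (∀ M : ℕ, 1 ≤ M → M ≤ N →
          ∀ A : ContinuousMultilinearMap ℂ (fun _ : Fin M => X) ℂ,
            Tendsto (fun n => A (fun _ => x n)) atTop (𝓝 (A (fun _ => x₀)))) →
        Tendsto (fun n => P n (fun _ => x n)) atTop (𝓝 0))
    {Y : Type*} [NormedAddCommGroup Y] [NormedSpace ℂ Y]
    (K : Set Y)
    (hK : ∀ k : ℕ → Y, (∀ n, k n ∈ K) → ∃ ψ : ℕ → ℕ, StrictMono ψ ∧ ∃ k₀ ∈ K,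
      ∀ φ : Y →L[ℂ] ℂ, Tendsto (fun n => φ (k (ψ n))) atTop (𝓝 (φ k₀)))
    (J : Set X)
    (hJ : ∀ j : ℕ → X, (∀ n, j n ∈ J) → ∃ ψ : ℕ → ℕ, StrictMono ψ ∧ ∃ j₀ ∈ J,
      ∀ M : ℕ, 1 ≤ M → M ≤ N →
        ∀ A : ContinuousMultilinearMap ℂ (fun _ : Fin M => X) ℂ,
          Tendsto (fun n => A (fun _ => j (ψ n))) atTop (𝓝 (A (fun _ => j₀)))) :
    ∀ (j : ℕ → X) (k : ℕ → Y), (∀ n, j n ∈ J) → (∀ n, k n ∈ K) →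
      ∃ ψ : ℕ → ℕ, StrictMono ψ ∧
        ∃ w ∈ tensorSpan N X Y,
          ∀ Φ : StrongDual ℂ
              (StrongDual ℂ
                (ContinuousMultilinearMap ℂ (fun _ : Fin N => X) (Y →L[ℂ] ℂ))),
            Tendsto (fun n => Φ (deltaTensor N (j (ψ n)) (k (ψ n)))) atTop (𝓝 (Φ w)) := by
  intro j k hj hk
  obtain ⟨ψ₁, hψ₁, j₀, -, hj₀ : PNWeaklyTendsto ℂ N (j ∘ ψ₁) j₀⟩ := hJ j hj
  obtain ⟨ψ₂, hψ₂, k₀, -, hk₀⟩ := hK (k ∘ ψ₁) fun n => hk (ψ₁ n)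
  refine ⟨ψ₁ ∘ ψ₂, hψ₁.comp hψ₂, deltaTensor N j₀ k₀, deltaTensor_mem_tensorSpan N j₀ k₀,
    fun Φ => ?_⟩
  simpa only [symmetricFormOfBidual_apply_const, Function.comp_apply] using
    HasPNDunfordPettis.tendsto_apply_diag hDP hN (symmetricFormOfBidual N Φ)
      (symmetricFormOfBidual_apply_comp_perm Φ) hk₀ (hj₀.comp hψ₂.tendsto_atTop)

/-- If `X` has the `P_N` Dunford–Pettis property (in the form: weakly null sequences of
`N`-homogeneous polynomials tend to `0` along `P_N`-weakly convergent sequences), then for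
every Banach space `Y`, every weakly compact set `K ⊆ Y` and every `P_N`-weakly compact set
`J ⊆ X`, the set `θ_N(J) ⊗ K` is relatively weakly compact in `(⊗̂^N_s X) ⊗̂ Y`
(weak compactness being stated sequentially, as is permitted by the Eberlein–Šmulian
theorem). -/
theorem rel_weakly_compact_theta_tensor {X : Type*} [NormedAddCommGroup X]
    [NormedSpace ℂ X] [CompleteSpace X] (N : ℕ) (hN : 0 < N)
    (hDP : ∀ (P : ℕ → ContinuousMultilinearMap ℂ (fun _ : Fin N => X) ℂ),
      (∀ n (σ : Equiv.Perm (Fin N)) (v : Fin N → X), P n (v ∘ σ) = P n v) →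
      (∀ Φ : StrongDual ℂ (ContinuousMultilinearMap ℂ (fun _ : Fin N => X) ℂ),
        Tendsto (fun n => Φ (P n)) atTop (𝓝 0)) →
      ∀ (x : ℕ → X) (x₀ : X),
        (∀ M : ℕ, 1 ≤ M → M ≤ N →
          ∀ A : ContinuousMultilinearMap ℂ (fun _ : Fin M => X) ℂ,
            Tendsto (fun n => A (fun _ => x n)) atTop (𝓝 (A (fun _ => x₀)))) →
        Tendsto (fun n => P n (fun _ => x n)) atTop (𝓝 0))
    {Y : Type*} [NormedAddCommGroup Y] [NormedSpace ℂ Y] [CompleteSpace Y]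
    (K : Set Y)
    (hK : ∀ k : ℕ → Y, (∀ n, k n ∈ K) → ∃ ψ : ℕ → ℕ, StrictMono ψ ∧ ∃ k₀ ∈ K,
      ∀ φ : Y →L[ℂ] ℂ, Tendsto (fun n => φ (k (ψ n))) atTop (𝓝 (φ k₀)))
    (J : Set X)
    (hJ : ∀ j : ℕ → X, (∀ n, j n ∈ J) → ∃ ψ : ℕ → ℕ, StrictMono ψ ∧ ∃ j₀ ∈ J,
      ∀ M : ℕ, 1 ≤ M → M ≤ N →
        ∀ A : ContinuousMultilinearMap ℂ (fun _ : Fin M => X) ℂ,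
          Tendsto (fun n => A (fun _ => j (ψ n))) atTop (𝓝 (A (fun _ => j₀)))) :
    ∀ (j : ℕ → X) (k : ℕ → Y), (∀ n, j n ∈ J) → (∀ n, k n ∈ K) →
      ∃ ψ : ℕ → ℕ, StrictMono ψ ∧
        ∃ w ∈ tensorSpan N X Y,
          ∀ Φ : StrongDual ℂ
              (StrongDual ℂ
                (ContinuousMultilinearMap ℂ (fun _ : Fin N => X) (Y →L[ℂ] ℂ))),
            Tendsto (fun n => Φ (deltaTensor N (j (ψ n)) (k (ψ n)))) atTop (𝓝 (Φ w)) :=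
  rel_weakly_compact_theta_tensor_general N hN hDP K hK J hJ
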